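/- Under sampling without replacement with n1 out of n units treated (n ≥ 2), for any two distinct indices i ≠ j, E[(T_i − π)^2 (T_j − π)] = −π(1−π)(1−2π)/(n−1), where π = n1/n. -/

import Mathlib

open Finset

/-- The set of assignment vectors with exactly `n1` treated units. -/
noncomputable def assignSet (n n1 : ℕ) : Finset (Fin n → Bool) :=
  Finset.univ.filter (fun t => (Finset.univ.filter (fun j => t j = true)).card = n1)

/-- Expectation of `f` under the uniform distribution on `assignSet n n1`. -/
noncomputable def cexp (n n1 : ℕ) (f : (Fin n → Bool) → ℝ) : ℝ :=
  (∑ t ∈ assignSet n n1, f t) / (assignSet n n1).card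

/-- Indicator of treatment for unit `i`. -/
noncomputable def Tv {n : ℕ} (t : Fin n → Bool) (i : Fin n) : ℝ := if t i then 1 else 0

/-!
Since `T_i² = T_i`, the centred moment expands into `E[T_i T_j]`, `E[T_i]`, `E[T_j]` and a
constant. All of these are instances of `E[∏_{k ∈ a} T_k] = C(n1, #a) / C(n, #a)`: identifying
assignments with their sets of treated units, the numerator counts the `n1`-subsets containing
`a`, which is `C(n - #a, n1 - #a)`, and `C(n, n1) C(n1, #a) = C(n, #a) C(n - #a, n1 - #a)`.
-/

section Moments

variable {n n1 : ℕ}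

lemma sum_assignSet_eq_sum_powersetCard (f : (Fin n → Bool) → ℝ) :
    ∑ t ∈ assignSet n n1, f t = ∑ s ∈ powersetCard n1 univ, f (fun k => decide (k ∈ s)) := by
  refine sum_nbij' (fun t => univ.filter (fun k => t k = true)) (fun s k => decide (k ∈ s))
    ?_ ?_ ?_ ?_ ?_
  · intro t ht
    simpa [assignSet] using ht
  · intro s hs
    simpa [assignSet] using hs
  · intro t _
    funext k
    simp
  · intro s _
    ext k
    simp
  · intro t _
    congr
    funext k
    simp

lemma card_assignSet : ((assignSet n n1).card : ℝ) = n.choose n1 := by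
  simpa using sum_assignSet_eq_sum_powersetCard (n := n) (n1 := n1) (fun _ => 1)

lemma cexp_add (f g : (Fin n → Bool) → ℝ) :
    cexp n n1 (fun t => f t + g t) = cexp n n1 f + cexp n n1 g := by
  simp only [cexp, sum_add_distrib, add_div]

lemma cexp_sub (f g : (Fin n → Bool) → ℝ) :
    cexp n n1 (fun t => f t - g t) = cexp n n1 f - cexp n n1 g := by
  simp only [cexp, sum_sub_distrib, sub_div]

lemma cexp_const_mul (c : ℝ) (f : (Fin n → Bool) → ℝ) :
    cexp n n1 (fun t => c * f t) = c * cexp n n1 f := by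
  simp only [cexp, ← mul_sum, mul_div_assoc]

lemma cexp_const (hle : n1 ≤ n) (c : ℝ) : cexp n n1 (fun _ => c) = c := by
  have hpos : (0 : ℝ) < n.choose n1 := by exact_mod_cast Nat.choose_pos hle
  rw [cexp, sum_const, nsmul_eq_mul, card_assignSet]
  field_simp

lemma prod_Tv_indicator (a s : Finset (Fin n)) :
    ∏ k ∈ a, Tv (fun k => decide (k ∈ s)) k = if a ⊆ s then 1 else 0 := by
  simp only [Tv, decide_eq_true_eq]
  exact prod_boole

lemma cexp_prod_Tv (hle : n1 ≤ n) (a : Finset (Fin n)) :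
    cexp n n1 (fun t => ∏ k ∈ a, Tv t k) = (n1.choose #a : ℝ) / n.choose #a := by
  simp only [cexp, sum_assignSet_eq_sum_powersetCard, prod_Tv_indicator, sum_boole,
    card_assignSet]
  rcases le_or_gt #a n1 with ha | ha
  · rw [card_filter_powersetCard_subset a univ n1 (subset_univ a) ha, card_univ,
      Fintype.card_fin]
    have hchoose := Nat.choose_mul (n := n) ha
    have hpos : (0 : ℝ) < n.choose #a := by
      exact_mod_cast Nat.choose_pos (card_le_univ a |>.trans_eq (Fintype.card_fin n))
    have hpos' : (0 : ℝ) < n.choose n1 := by exact_mod_cast Nat.choose_pos hle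
    rw [div_eq_div_iff hpos'.ne' hpos.ne']
    norm_cast
    linarith [hchoose]
  · rw [Nat.choose_eq_zero_of_lt ha, filter_false_of_mem]
    · simp
    · intro s hs has
      exact (card_le_card has).trans_eq (mem_powersetCard.mp hs).2 |>.not_gt ha

lemma cexp_Tv (hle : n1 ≤ n) (i : Fin n) : cexp n n1 (fun t => Tv t i) = n1 / n := by
  simpa using cexp_prod_Tv hle {i}

lemma cexp_Tv_mul_Tv (hle : n1 ≤ n) {i j : Fin n} (hij : i ≠ j) :
    cexp n n1 (fun t => Tv t i * Tv t j) = n1 * (n1 - 1) / (n * (n - 1)) := by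
  have h := cexp_prod_Tv hle {i, j}
  rw [card_pair hij, Nat.cast_choose_two, Nat.cast_choose_two] at h
  simp only [prod_pair hij] at h
  rw [h]
  field_simp

lemma centered_Tv_sq_mul (t : Fin n → Bool) (i j : Fin n) (p : ℝ) :
    (Tv t i - p) ^ 2 * (Tv t j - p)
      = (1 - 2 * p) * (Tv t i * Tv t j) - p * (1 - 2 * p) * Tv t i + p ^ 2 * Tv t j - p ^ 3 := by
  unfold Tv
  split_ifs <;> ring

end Moments

theorem stmt_5_general (n n1 : ℕ) (hle : n1 ≤ n) (i j : Fin n)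
    (hij : i ≠ j) :
    cexp n n1 (fun t => (Tv t i - (n1 : ℝ) / n) ^ 2 * (Tv t j - (n1 : ℝ) / n))
      = -(((n1 : ℝ) / n) * (1 - (n1 : ℝ) / n) * (1 - 2 * ((n1 : ℝ) / n))) / ((n : ℝ) - 1) := by
  have hn2 : (2 : ℝ) ≤ n := by
    exact_mod_cast (Fintype.one_lt_card_iff.mpr ⟨i, j, hij⟩).trans_eq (Fintype.card_fin n)
  simp only [centered_Tv_sq_mul, cexp_sub, cexp_add, cexp_const_mul, cexp_const hle,
    cexp_Tv hle, cexp_Tv_mul_Tv hle hij]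
  have hn1 : (n : ℝ) - 1 ≠ 0 := by linarith
  field_simp
  ring

theorem stmt_5 (n n1 : ℕ) (hn : 2 ≤ n) (h1 : 1 ≤ n1) (hle : n1 ≤ n) (i j : Fin n)
    (hij : i ≠ j) :
    cexp n n1 (fun t => (Tv t i - (n1 : ℝ) / n) ^ 2 * (Tv t j - (n1 : ℝ) / n))
      = -(((n1 : ℝ) / n) * (1 - (n1 : ℝ) / n) * (1 - 2 * ((n1 : ℝ) / n))) / ((n : ℝ) - 1) :=
  stmt_5_general n n1 hle i j hij
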